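/- Let Δt, α, β_el, β_ee > 0, set a = Δt/α², b = Δt/α, D = 1 + a β_el + b β_ee, r = (1 + a β_el + b(β_ee − 1))/D, and ρ = (1 + a(β_el − 2π) + b(β_ee − 1))/D. Let M, M_el : ℝ² → ℝ be continuous radial functions (depending on k only through |k|), and let (fⁿ)_{n≥0} be a sequence of continuous functions ℝ² → ℝ satisfying, for every n ≥ 0 and k ∈ ℝ², the IMEX penalized scheme (f^{n+1}(k) − fⁿ(k))/Δt = [Q_el(fⁿ)(k) − β_el(M_el(k) − fⁿ(k))]/α² + β_el(M_el(k) − f^{n+1}(k))/α² + (1−β_ee)(M(k) − fⁿ(k))/α + β_ee(M(k) − f^{n+1}(k))/α (i.e., the electron–electron operator is replaced by the BGK operator M − f). Then for every n ≥ 0: (i) fⁿ − ρⁿ f⁰ is a radial function, hence Q_el(fⁿ) = ρⁿ Q_el(f⁰); and (ii) fⁿ − M = rⁿ (f⁰ − M) + (a/D) Σ_{j=0}^{n−1} r^{n−1−j} ρ^j Q_el(f⁰), pointwise on ℝ². -/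

import Mathlib

/-!
Solving the implicit step gives `fⁿ⁺¹ = r fⁿ + (a/D) Q_el(fⁿ) + (b/D) M`, and `Mel` cancels.
Writing `Q_el(g) = S g − 2π g` with `S g(k) = ∫_{S¹} g(|k|σ) dσ` radial, and using
`ρ = r − 2π a/D`, the difference `fⁿ⁺¹ − ρ fⁿ` is radial; hence so is `fⁿ − ρⁿ f⁰`.
Since `Q_el` is linear and kills radial functions, `Q_el(fⁿ) = ρⁿ Q_el(f⁰)`, so `xₙ = fⁿ − M`
solves `xₙ₊₁ = r xₙ + (a/D) ρⁿ Q_el(f⁰)` (as `b/D = 1 − r`), which is the discrete Duhamel formula.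
-/

open MeasureTheory Real

noncomputable section

/-- The point on the unit circle `S¹ ⊂ ℝ²` at angle `θ`. -/
def circ (θ : ℝ) : EuclideanSpace ℝ (Fin 2) :=
  (WithLp.equiv 2 (Fin 2 → ℝ)).symm ![Real.cos θ, Real.sin θ]

/-- Integral over the unit circle `S¹ ⊂ ℝ²` with respect to arclength measure,
parametrized by the angle. -/
def sphereIntegral (g : EuclideanSpace ℝ (Fin 2) → ℝ) : ℝ :=
  ∫ θ in (0:ℝ)..(2 * Real.pi), g (circ θ)

/-- The elastic collision operator (parabolic band, unit scattering matrix):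
`Q_el(f)(k) = ∫_{S¹} f(|k| σ) dσ − 2π f(k)`. -/
def Qel (f : EuclideanSpace ℝ (Fin 2) → ℝ) (k : EuclideanSpace ℝ (Fin 2)) : ℝ :=
  sphereIntegral (fun σ => f (‖k‖ • σ)) - 2 * Real.pi * f k

/-- A function on `ℝ²` is radial if it depends on `k` only through `|k|`. -/
def Radial (g : EuclideanSpace ℝ (Fin 2) → ℝ) : Prop :=
  ∀ k k' : EuclideanSpace ℝ (Fin 2), ‖k‖ = ‖k'‖ → g k = g k'

theorem circ_norm (θ : ℝ) : ‖circ θ‖ = 1 := by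
  simp [circ, EuclideanSpace.norm_eq, Fin.sum_univ_two]

theorem continuous_circ : Continuous circ :=
  (PiLp.continuous_toLp 2 _).comp (by fun_prop)

namespace Radial

theorem add {g h : EuclideanSpace ℝ (Fin 2) → ℝ} (hg : Radial g) (hh : Radial h) :
    Radial (fun k => g k + h k) :=
  fun k k' hk => congrArg₂ (· + ·) (hg k k' hk) (hh k k' hk)

theorem const_mul {g : EuclideanSpace ℝ (Fin 2) → ℝ} (c : ℝ) (hg : Radial g) :
    Radial (fun k => c * g k) :=
  fun k k' hk => congrArg (c * ·) (hg k k' hk)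

theorem apply_norm_smul_circ {g : EuclideanSpace ℝ (Fin 2) → ℝ} (hg : Radial g)
    (k : EuclideanSpace ℝ (Fin 2)) (θ : ℝ) : g (‖k‖ • circ θ) = g k :=
  hg _ _ (by rw [norm_smul, circ_norm, mul_one, norm_norm])

end Radial

theorem radial_sphereIntegral_norm_smul (g : EuclideanSpace ℝ (Fin 2) → ℝ) :
    Radial (fun k => sphereIntegral (fun σ => g (‖k‖ • σ))) :=
  fun _ _ hk => congrArg (fun s : ℝ => sphereIntegral fun σ => g (s • σ)) hk

theorem Qel_eq_const_mul_of_radial_sub {g h : EuclideanSpace ℝ (Fin 2) → ℝ} {c : ℝ}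
    (hh : Continuous h) (hgh : Radial (fun k => g k - c * h k)) (k : EuclideanSpace ℝ (Fin 2)) :
    Qel g k = c * Qel h k := by
  have hint : IntervalIntegrable (fun θ => h (‖k‖ • circ θ)) volume 0 (2 * π) :=
    (hh.comp (continuous_circ.const_smul ‖k‖)).intervalIntegrable _ _
  have hsplit : ∀ θ, g (‖k‖ • circ θ) = c * h (‖k‖ • circ θ) + (g k - c * h k) := fun θ => by
    rw [← hgh.apply_norm_smul_circ k θ]; ring
  simp only [Qel, sphereIntegral, hsplit]
  rw [intervalIntegral.integral_add (hint.const_mul c) intervalIntegrable_const,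
    intervalIntegral.integral_const_mul, intervalIntegral.integral_const, smul_eq_mul]
  ring

theorem radial_sub_pow_mul_of_radial_sub_mul {f : ℕ → EuclideanSpace ℝ (Fin 2) → ℝ} {ρ : ℝ}
    (h : ∀ n, Radial (fun k => f (n + 1) k - ρ * f n k)) (n : ℕ) :
    Radial (fun k => f n k - ρ ^ n * f 0 k) := by
  induction n with
  | zero => exact fun k k' _ => by simp
  | succ n ih =>
    convert (h n).add (ih.const_mul ρ) using 2 with k
    ring

theorem eq_pow_mul_add_sum_of_succ_eq {R : Type*} [CommRing R] {x : ℕ → R} {r ρ c : R}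
    (h : ∀ n, x (n + 1) = r * x n + c * ρ ^ n) (n : ℕ) :
    x n = r ^ n * x 0 + c * ∑ j ∈ Finset.range n, r ^ (n - 1 - j) * ρ ^ j := by
  induction n with
  | zero => simp
  | succ n ih =>
    have hsum := geom_sum₂_succ_eq ρ r (n := n)
    simp only [Nat.add_sub_cancel]
    simp only [mul_comm (ρ ^ _)] at hsum
    rw [hsum, h n, ih]
    ring

theorem imex_step_eq {Δt α βel βee a b u v q m mel : ℝ} (hΔt : Δt ≠ 0) (hα : α ≠ 0)
    (ha : a = Δt / α ^ 2) (hb : b = Δt / α)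
    (h : (v - u) / Δt = (q - βel * (mel - u)) / α ^ 2 + βel * (mel - v) / α ^ 2
      + (1 - βee) * (m - u) / α + βee * (m - v) / α) :
    v * (1 + a * βel + b * βee) = (1 + a * βel + b * (βee - 1)) * u + a * q + b * m := by
  subst ha hb
  field_simp at h ⊢
  linear_combination h

theorem stmt_19_general (Δt α βel βee : ℝ)
    (hΔt : 0 < Δt) (hα : 0 < α) (hβel : 0 < βel) (hβee : 0 < βee)
    (a b D r ρ : ℝ)
    (ha : a = Δt / α ^ 2) (hb : b = Δt / α)
    (hD : D = 1 + a * βel + b * βee)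
    (hr : r = (1 + a * βel + b * (βee - 1)) / D)
    (hρ : ρ = (1 + a * (βel - 2 * Real.pi) + b * (βee - 1)) / D)
    (M Mel : EuclideanSpace ℝ (Fin 2) → ℝ)
    (hMrad : Radial M)
    (f : ℕ → EuclideanSpace ℝ (Fin 2) → ℝ)
    (hf : ∀ n, Continuous (f n))
    (hscheme : ∀ (n : ℕ) (k : EuclideanSpace ℝ (Fin 2)),
      (f (n+1) k - f n k) / Δt =
        (Qel (f n) k - βel * (Mel k - f n k)) / α ^ 2
          + βel * (Mel k - f (n+1) k) / α ^ 2
          + (1 - βee) * (M k - f n k) / α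
          + βee * (M k - f (n+1) k) / α) :
    ∀ n : ℕ,
      Radial (fun k => f n k - ρ ^ n * f 0 k) ∧
      (∀ k, Qel (f n) k = ρ ^ n * Qel (f 0) k) ∧
      (∀ k, f n k - M k =
        r ^ n * (f 0 k - M k)
          + (a / D) * (∑ j ∈ Finset.range n, r ^ (n - 1 - j) * ρ ^ j) * Qel (f 0) k) := by
  have hD0 : D ≠ 0 := by rw [hD, ha, hb]; positivity
  have hstep (n : ℕ) (k : EuclideanSpace ℝ (Fin 2)) :
      f (n + 1) k = r * f n k + a / D * Qel (f n) k + b / D * M k := by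
    have h := imex_step_eq hΔt.ne' hα.ne' ha hb (hscheme n k)
    rw [← hD] at h
    rw [hr]
    field_simp
    linear_combination h
  have hrad : ∀ n, Radial (fun k => f n k - ρ ^ n * f 0 k) := by
    refine radial_sub_pow_mul_of_radial_sub_mul fun n => ?_
    convert ((radial_sphereIntegral_norm_smul (f n)).const_mul (a / D)).add
      (hMrad.const_mul (b / D)) using 2 with k
    rw [hstep, hρ, hr, Qel]
    field_simp
    ring
  have hQel (n : ℕ) : ∀ k, Qel (f n) k = ρ ^ n * Qel (f 0) k :=
    Qel_eq_const_mul_of_radial_sub (hf 0) (hrad n)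
  refine fun n => ⟨hrad n, hQel n, fun k => ?_⟩
  have hduhamel := eq_pow_mul_add_sum_of_succ_eq (x := fun n => f n k - M k) (r := r) (ρ := ρ)
    (c := a / D * Qel (f 0) k) (fun n => by rw [hstep, hQel, hr]; field_simp; rw [hD]; ring) n
  linear_combination hduhamel

/-- Asymptotic behavior of the IMEX penalized scheme for
`∂ₜ f = Q_el(f)/α² + (M − f)/α`: the non-radial part of `fⁿ` decays geometrically
with ratio `ρ`, and `fⁿ − M` satisfies a discrete Duhamel formula. -/
theorem stmt_19 (Δt α βel βee : ℝ)
    (hΔt : 0 < Δt) (hα : 0 < α) (hβel : 0 < βel) (hβee : 0 < βee)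
    (a b D r ρ : ℝ)
    (ha : a = Δt / α ^ 2) (hb : b = Δt / α)
    (hD : D = 1 + a * βel + b * βee)
    (hr : r = (1 + a * βel + b * (βee - 1)) / D)
    (hρ : ρ = (1 + a * (βel - 2 * Real.pi) + b * (βee - 1)) / D)
    (M Mel : EuclideanSpace ℝ (Fin 2) → ℝ)
    (hM : Continuous M) (hMrad : Radial M)
    (hMel : Continuous Mel) (hMelrad : Radial Mel)
    (f : ℕ → EuclideanSpace ℝ (Fin 2) → ℝ)
    (hf : ∀ n, Continuous (f n))
    (hscheme : ∀ (n : ℕ) (k : EuclideanSpace ℝ (Fin 2)),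
      (f (n+1) k - f n k) / Δt =
        (Qel (f n) k - βel * (Mel k - f n k)) / α ^ 2
          + βel * (Mel k - f (n+1) k) / α ^ 2
          + (1 - βee) * (M k - f n k) / α
          + βee * (M k - f (n+1) k) / α) :
    ∀ n : ℕ,
      Radial (fun k => f n k - ρ ^ n * f 0 k) ∧
      (∀ k, Qel (f n) k = ρ ^ n * Qel (f 0) k) ∧
      (∀ k, f n k - M k =
        r ^ n * (f 0 k - M k)
          + (a / D) * (∑ j ∈ Finset.range n, r ^ (n - 1 - j) * ρ ^ j) * Qel (f 0) k) :=
  stmt_19_general Δt α βel βee hΔt hα hβel hβee a b D r ρ ha hb hD hr hρ M Mel hMrad f hf hscheme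

end
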